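/- For all nonnegative integers n and k, the number of binary trees with n vertices whose hook number equals k is equal to the number of rooted plane (ordered) trees with n edges having exactly k vertices with at least one child which is a leaf. -/

import Mathlib

/-- Binary trees: `leaf` is the empty tree, `node l r` is a vertex with
left subtree `l` and right subtree `r`. -/
inductive BT : Type
  | leaf : BT
  | node : BT → BT → BT
  deriving DecidableEq

/-- Number of vertices of a binary tree. -/
def BT.size : BT → ℕ
  | leaf => 0
  | node l r => 1 + l.size + r.size

mutual
  /-- The number of hooks in the hook partition of a binary tree: one hook for the
  root, plus the hooks of the trees hanging off the root's hook. -/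
  def hookCount : BT → ℕ
    | .leaf => 0
    | .node l r => 1 + hookAuxL l + hookAuxR r
  /-- Total number of hooks of the right subtrees hanging off the leftmost branch. -/
  def hookAuxL : BT → ℕ
    | .leaf => 0
    | .node l r => hookCount r + hookAuxL l
  /-- Total number of hooks of the left subtrees hanging off the rightmost branch. -/
  def hookAuxR : BT → ℕ
    | .leaf => 0
    | .node l r => hookCount l + hookAuxR r
end
/-- Rooted plane (ordered) trees: a root together with a (linearly ordered, possibly
empty) list of subtrees. -/
inductive PTree : Type
  | node : List PTree → PTree

/-- Number of edges of a rooted plane tree. -/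
def PTree.edges : PTree → ℕ
  | .node ts => ts.length + (ts.attach.map (fun x => PTree.edges x.1)).sum
decreasing_by
  have := List.sizeOf_lt_of_mem x.2
  simp only [PTree.node.sizeOf_spec]
  omega

/-- Whether a rooted plane tree is a single vertex (a leaf). -/
def PTree.isLeaf : PTree → Bool
  | .node ts => ts.isEmpty

/-- The number of vertices of a rooted plane tree having at least one child which is
a leaf. -/
def PTree.cl : PTree → ℕ
  | .node ts => (if ts.any PTree.isLeaf then 1 else 0) + (ts.attach.map (fun x => PTree.cl x.1)).sum
decreasing_by
  have := List.sizeOf_lt_of_mem x.2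
  simp only [PTree.node.sizeOf_spec]
  omega

/-!
Unfolding the hook of the root, a nonempty binary tree is a root together with two lists of
binary trees: the right subtrees hanging off its left branch and the left subtrees hanging off
its right branch. Its size is one plus the lengths and sizes of both lists, its hook number one
plus the hook numbers in both lists.

On the plane-tree side, `PTree.assemble` turns a pair of forests `(F₁, F₂)` bijectively into a
nonempty list of children: if `F₁` has no leaf, it is `F₁ ++ leaf :: F₂`; if `F₁ = A ++ leaf :: B`
with `A` leaf-free, it is `A ++ [node (assemble B F₂)]`. Either way the node gains one edge more
than the two forests have and exactly one more vertex with a leaf child. Recursing through both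
decompositions gives a bijection `BT ≃ PTree` carrying size to edges and hook number to `cl`.
-/

namespace PTree

def forestEdges (F : List PTree) : ℕ := F.length + (F.map edges).sum

def forestCl (F : List PTree) : ℕ := (F.map cl).sum

@[simp] theorem forestEdges_nil : forestEdges [] = 0 := rfl

@[simp] theorem forestEdges_cons (t : PTree) (F : List PTree) :
    forestEdges (t :: F) = 1 + t.edges + forestEdges F := by
  simp only [forestEdges, List.length_cons, List.map_cons, List.sum_cons]; omega

@[simp] theorem forestCl_nil : forestCl [] = 0 := rfl

@[simp] theorem forestCl_cons (t : PTree) (F : List PTree) :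
    forestCl (t :: F) = t.cl + forestCl F := by
  simp [forestCl]

theorem edges_node (ts : List PTree) : (node ts).edges = forestEdges ts := by
  rw [edges]; simp [forestEdges]

theorem cl_node (ts : List PTree) :
    (node ts).cl = (if ts.any isLeaf then 1 else 0) + forestCl ts := by
  rw [cl]; simp [forestCl]

@[simp] theorem isLeaf_node (ts : List PTree) : (node ts).isLeaf = ts.isEmpty := rfl

@[simp] theorem cl_node_nil : (node []).cl = 0 := by simp [cl_node]

theorem cl_node_cons_of_not_isLeaf {t : PTree} (ht : t.isLeaf = false) (ts : List PTree) :
    (node (t :: ts)).cl = t.cl + (node ts).cl := by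
  simp only [cl_node, List.any_cons, ht, Bool.false_or, forestCl_cons]; omega

theorem eq_node_nil_of_isLeaf {t : PTree} (h : t.isLeaf) : t = node [] := by
  obtain ⟨ts⟩ := t
  simpa using h

theorem edges_lt_forestEdges_of_mem {t : PTree} {F : List PTree} (h : t ∈ F) :
    t.edges < forestEdges F := by
  induction F with
  | nil => simp at h
  | cons s F ih =>
    rcases List.mem_cons.mp h with rfl | h
    · rw [forestEdges_cons]; omega
    · have := ih h; rw [forestEdges_cons]; omega

def assemble : List PTree → List PTree → List PTree
  | [], F₂ => node [] :: F₂
  | t :: F₁, F₂ => if t.isLeaf then [node (assemble F₁ F₂)] else t :: assemble F₁ F₂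

@[simp] theorem assemble_nil (F₂ : List PTree) : assemble [] F₂ = node [] :: F₂ := rfl

theorem assemble_cons_of_isLeaf {t : PTree} (ht : t.isLeaf) (F₁ F₂ : List PTree) :
    assemble (t :: F₁) F₂ = [node (assemble F₁ F₂)] := by
  simp [assemble, ht]

theorem assemble_cons_of_not_isLeaf {t : PTree} (ht : t.isLeaf = false) (F₁ F₂ : List PTree) :
    assemble (t :: F₁) F₂ = t :: assemble F₁ F₂ := by
  simp [assemble, ht]

theorem assemble_ne_nil (F₁ F₂ : List PTree) : assemble F₁ F₂ ≠ [] := by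
  cases F₁ with
  | nil => simp [assemble]
  | cons t F₁ => by_cases ht : t.isLeaf <;> simp [assemble, ht]

theorem isLeaf_node_assemble (F₁ F₂ : List PTree) : (node (assemble F₁ F₂)).isLeaf = false := by
  simp [assemble_ne_nil]

theorem forestEdges_assemble (F₁ F₂ : List PTree) :
    forestEdges (assemble F₁ F₂) = 1 + forestEdges F₁ + forestEdges F₂ := by
  induction F₁ with
  | nil => simp [edges_node]
  | cons t F₁ ih =>
    cases ht : t.isLeaf
    · rw [assemble_cons_of_not_isLeaf ht, forestEdges_cons, forestEdges_cons, ih]; omega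
    · obtain rfl := eq_node_nil_of_isLeaf ht
      simp only [assemble_cons_of_isLeaf ht, forestEdges_cons, edges_node, ih, forestEdges_nil]
      omega

theorem cl_node_assemble (F₁ F₂ : List PTree) :
    (node (assemble F₁ F₂)).cl = 1 + forestCl F₁ + forestCl F₂ := by
  induction F₁ with
  | nil => simp [cl_node]
  | cons t F₁ ih =>
    cases ht : t.isLeaf
    · rw [assemble_cons_of_not_isLeaf ht, cl_node_cons_of_not_isLeaf ht, ih, forestCl_cons]; omega
    · obtain rfl := eq_node_nil_of_isLeaf ht
      rw [assemble_cons_of_isLeaf ht, cl_node_cons_of_not_isLeaf (isLeaf_node_assemble F₁ F₂), ih,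
        forestCl_cons, cl_node_nil]
      omega

theorem assemble_inj {F₁ F₂ G₁ G₂ : List PTree} (h : assemble F₁ F₂ = assemble G₁ G₂) :
    F₁ = G₁ ∧ F₂ = G₂ := by
  induction F₁ generalizing G₁ with
  | nil =>
    cases G₁ with
    | nil => simpa using h
    | cons s G₁ =>
      cases hs : s.isLeaf
      · rw [assemble_nil, assemble_cons_of_not_isLeaf hs, List.cons.injEq] at h
        simp [← h.1] at hs
      · simp [assemble_cons_of_isLeaf hs, assemble_ne_nil] at h
  | cons t F₁ ih =>
    cases G₁ with
    | nil =>
      cases ht : t.isLeaf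
      · rw [assemble_nil, assemble_cons_of_not_isLeaf ht, List.cons.injEq] at h
        simp [h.1] at ht
      · simp [assemble_cons_of_isLeaf ht, assemble_ne_nil] at h
    | cons s G₁ =>
      cases ht : t.isLeaf <;> cases hs : s.isLeaf <;>
        simp only [assemble_cons_of_isLeaf, assemble_cons_of_not_isLeaf, ht, hs, List.cons.injEq,
          node.injEq] at h
      · simpa [h.1] using ih h.2
      · exact absurd h.2 (assemble_ne_nil _ _)
      · exact absurd h.2.symm (assemble_ne_nil _ _)
      · simpa [eq_node_nil_of_isLeaf ht, eq_node_nil_of_isLeaf hs] using ih h.1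

theorem exists_assemble_eq : ∀ cs : List PTree, cs ≠ [] → ∃ F₁ F₂, assemble F₁ F₂ = cs
  | [], h => absurd rfl h
  | node [] :: cs, _ => ⟨[], cs, rfl⟩
  | node (d :: ds) :: [], _ => by
    obtain ⟨F₁, F₂, hF⟩ := exists_assemble_eq (d :: ds) (List.cons_ne_nil _ _)
    exact ⟨node [] :: F₁, F₂, by simp [assemble, hF]⟩
  | node (d :: ds) :: c :: cs, _ => by
    obtain ⟨F₁, F₂, hF⟩ := exists_assemble_eq (c :: cs) (List.cons_ne_nil _ _)
    exact ⟨node (d :: ds) :: F₁, F₂, by simp [assemble, hF]⟩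

end PTree

namespace BT

open PTree

mutual
  def toPTree : BT → PTree
    | leaf => .node []
    | node l r => .node (assemble l.leftForest r.rightForest)
  def leftForest : BT → List PTree
    | leaf => []
    | node l r => r.toPTree :: l.leftForest
  def rightForest : BT → List PTree
    | leaf => []
    | node l r => l.toPTree :: r.rightForest
end

mutual
  theorem edges_toPTree : ∀ T : BT, T.toPTree.edges = T.size
    | leaf => by simp [toPTree, edges_node, size]
    | node l r => by
      rw [toPTree, edges_node, forestEdges_assemble, forestEdges_leftForest,
        forestEdges_rightForest, size]
  theorem forestEdges_leftForest : ∀ T : BT, forestEdges T.leftForest = T.size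
    | leaf => rfl
    | node l r => by
      rw [leftForest, forestEdges_cons, edges_toPTree, forestEdges_leftForest, size]; omega
  theorem forestEdges_rightForest : ∀ T : BT, forestEdges T.rightForest = T.size
    | leaf => rfl
    | node l r => by
      rw [rightForest, forestEdges_cons, edges_toPTree, forestEdges_rightForest, size]
end

mutual
  theorem cl_toPTree : ∀ T : BT, T.toPTree.cl = hookCount T
    | leaf => by simp [toPTree, cl_node, hookCount]
    | node l r => by
      rw [toPTree, cl_node_assemble, forestCl_leftForest, forestCl_rightForest, hookCount]
  theorem forestCl_leftForest : ∀ T : BT, forestCl T.leftForest = hookAuxL T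
    | leaf => rfl
    | node l r => by rw [leftForest, forestCl_cons, cl_toPTree, forestCl_leftForest, hookAuxL]
  theorem forestCl_rightForest : ∀ T : BT, forestCl T.rightForest = hookAuxR T
    | leaf => rfl
    | node l r => by rw [rightForest, forestCl_cons, cl_toPTree, forestCl_rightForest, hookAuxR]
end

mutual
  theorem toPTree_inj : ∀ {T T' : BT}, T.toPTree = T'.toPTree → T = T'
    | leaf, leaf, _ => rfl
    | leaf, node _ _, h => by
      rw [toPTree, toPTree, PTree.node.injEq] at h
      exact absurd h.symm (assemble_ne_nil _ _)
    | node _ _, leaf, h => by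
      rw [toPTree, toPTree, PTree.node.injEq] at h
      exact absurd h (assemble_ne_nil _ _)
    | node l r, node l' r', h => by
      rw [toPTree, toPTree, PTree.node.injEq] at h
      obtain ⟨hl, hr⟩ := assemble_inj h
      rw [leftForest_inj hl, rightForest_inj hr]
  theorem leftForest_inj : ∀ {T T' : BT}, T.leftForest = T'.leftForest → T = T'
    | leaf, leaf, _ => rfl
    | leaf, node _ _, h => nomatch h
    | node _ _, leaf, h => nomatch h
    | node l r, node l' r', h => by
      obtain ⟨hr, hl⟩ := List.cons.inj h
      rw [leftForest_inj hl, toPTree_inj hr]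
  theorem rightForest_inj : ∀ {T T' : BT}, T.rightForest = T'.rightForest → T = T'
    | leaf, leaf, _ => rfl
    | leaf, node _ _, h => nomatch h
    | node _ _, leaf, h => nomatch h
    | node l r, node l' r', h => by
      obtain ⟨hl, hr⟩ := List.cons.inj h
      rw [toPTree_inj hl, rightForest_inj hr]
end

theorem exists_leftForest_eq {F : List PTree} (h : ∀ W ∈ F, ∃ T : BT, T.toPTree = W) :
    ∃ T : BT, T.leftForest = F := by
  induction F with
  | nil => exact ⟨leaf, rfl⟩
  | cons W F ih =>
    obtain ⟨R, hR⟩ := h W List.mem_cons_self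
    obtain ⟨L, hL⟩ := ih fun W' hW' => h W' (List.mem_cons_of_mem _ hW')
    exact ⟨node L R, by rw [leftForest, hR, hL]⟩

theorem exists_rightForest_eq {F : List PTree} (h : ∀ W ∈ F, ∃ T : BT, T.toPTree = W) :
    ∃ T : BT, T.rightForest = F := by
  induction F with
  | nil => exact ⟨leaf, rfl⟩
  | cons W F ih =>
    obtain ⟨L, hL⟩ := h W List.mem_cons_self
    obtain ⟨R, hR⟩ := ih fun W' hW' => h W' (List.mem_cons_of_mem _ hW')
    exact ⟨node L R, by rw [rightForest, hL, hR]⟩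

theorem toPTree_surjective : Function.Surjective toPTree
  | .node [] => ⟨leaf, rfl⟩
  | .node (c :: cs) => by
    obtain ⟨F₁, F₂, hF⟩ := exists_assemble_eq (c :: cs) (List.cons_ne_nil _ _)
    have hsize : forestEdges (c :: cs) = 1 + forestEdges F₁ + forestEdges F₂ :=
      hF ▸ forestEdges_assemble F₁ F₂
    obtain ⟨l, hl⟩ := exists_leftForest_eq fun W hW => toPTree_surjective W
    obtain ⟨r, hr⟩ := exists_rightForest_eq fun W hW => toPTree_surjective W
    exact ⟨node l r, by rw [toPTree, hl, hr, hF]⟩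
termination_by W => W.edges
decreasing_by
  all_goals
    rw [edges_node, hsize]
    have := edges_lt_forestEdges_of_mem hW
    omega

noncomputable def equivPTree : BT ≃ PTree :=
  Equiv.ofBijective toPTree ⟨fun _ _ => toPTree_inj, toPTree_surjective⟩

@[simp] theorem equivPTree_apply (T : BT) : equivPTree T = T.toPTree := rfl

end BT

/-- For all `n`, `k`, the number of binary trees with `n` vertices
and hook number `k` equals the number of rooted plane (ordered) trees with `n` edges
having exactly `k` vertices with at least one child which is a leaf. -/
theorem stmt19 (n k : ℕ) :
    Nat.card {T : BT // T.size = n ∧ hookCount T = k} =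
      Nat.card {W : PTree // W.edges = n ∧ W.cl = k} :=
  Nat.card_congr <| BT.equivPTree.subtypeEquiv fun T => by
    rw [BT.equivPTree_apply, BT.edges_toPTree, BT.cl_toPTree]
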